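/- arXiv:cs/0608096 — 10 statements merged into one kernel-verified Lean document; each statement's English description precedes it below -/
import Mathlib

section
/- If all correct clocks are pairwise within γ (in circular distance mod M) at the moment before the first correct clock wraps around, then at every subsequent instant during the wrap-around period, any two correct clocks i, j satisfy |clock_i − clock_j| ≤ γ or |clock_i − clock_j| ≥ M − γ. -/
/-- Value of a clock that runs at real-time rate and wraps around at `M`. -/
noncomputable def wrapClock (M x : ℝ) : ℝ := x - M * (⌊x / M⌋ : ℝ)

lemma wrapClock_mem (M x : ℝ) (hM : 0 < M) : 0 ≤ wrapClock M x ∧ wrapClock M x < M := by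
  have h1 := Int.fract_nonneg (x / M)
  have h2 := Int.fract_lt_one (x / M)
  have he : wrapClock M x = M * Int.fract (x / M) := by
    unfold wrapClock Int.fract; field_simp
  constructor
  · rw [he]; exact mul_nonneg hM.le h1
  · rw [he]; nlinarith

/-- If correct clocks are pairwise within γ in circular distance before any wrap,
then at every later instant any two correct clocks differ by at most γ or
at least M - γ. -/
theorem wraparound_precision (M γ : ℝ) (hM : 0 < M) (hγ : 0 ≤ γ) (hγM : γ < M / 2)
    {ι : Type*} (x : ι → ℝ) (hx : ∀ i, 0 ≤ x i ∧ x i < M)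
    (C : ι → ℝ → ℝ) (hC : ∀ i t, C i t = wrapClock M (x i + t))
    (hsync : ∀ i j, |x i - x j| ≤ γ ∨ M - γ ≤ |x i - x j|) :
    ∀ t, 0 ≤ t → ∀ i j, |C i t - C j t| ≤ γ ∨ M - γ ≤ |C i t - C j t| := by
  intro t ht i j
  have hCi := hC i t
  have hCj := hC j t
  obtain ⟨hxi0, hxiM⟩ := hx i
  obtain ⟨hxj0, hxjM⟩ := hx j
  have hbi : 0 ≤ C i t ∧ C i t < M := by rw [hCi]; exact wrapClock_mem M _ hM
  have hbj : 0 ≤ C j t ∧ C j t < M := by rw [hCj]; exact wrapClock_mem M _ hM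
  obtain ⟨hbi0, hbiM⟩ := hbi
  obtain ⟨hbj0, hbjM⟩ := hbj
  set k : ℤ := ⌊(x j + t) / M⌋ - ⌊(x i + t) / M⌋ with hkdef
  have key : C i t - C j t = (x i - x j) + M * (k : ℝ) := by
    rw [hCi, hCj, hkdef]; unfold wrapClock; push_cast; ring
  have hk1 : |(k : ℝ)| < 2 := by
    have h1 : |M * (k : ℝ)| < 2 * M := by
      have : M * (k : ℝ) = (C i t - C j t) - (x i - x j) := by linarith
      rw [this]
      rw [abs_lt]
      constructor <;> [nlinarith; nlinarith]
    rw [abs_mul, abs_of_pos hM] at h1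
    nlinarith
  have hk2 : |k| < 2 := by exact_mod_cast hk1
  have hk3 : k = -1 ∨ k = 0 ∨ k = 1 := by
    rw [abs_lt] at hk2; omega
  rcases hk3 with hk | hk | hk <;>
    rw [hk] at key <;> push_cast at key <;>
    rcases hsync i j with h | h <;>
    rcases abs_cases (x i - x j) with ⟨he1, he2⟩ | ⟨he1, he2⟩ <;>
    rcases abs_cases (C i t - C j t) with ⟨hd1, hd2⟩ | ⟨hd1, hd2⟩ <;>
    rw [he1] at h <;> rw [hd1] <;>
    first
      | (left; linarith)
      | (right; linarith)
end

section
/- Under the convergence analysis of ClockSynch: if all correct pulses occur within σ of each other and the consensus terminates within agreement_duration after the pulse, then after the posterior clock adjustment of the last correct node, all correct clock values are within γ₁ = σ(1+ρ) + (σ + agreement_duration)·2ρ of each other. -/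
/-- Convergence precision γ₁ = σ(1+ρ) + (σ + agreement_duration)·2ρ: clocks within
σ(1+ρ) at a reference time, drifting apart at rate ≤ 2ρ, stay within γ₁ throughout
an interval of length σ + agreement_duration. -/
theorem convergence_precision {ι : Type*} (σ ρ AD r : ℝ)
    (hσ : 0 < σ) (hρ : 0 < ρ) (hAD : 0 < AD)
    (C : ι → ℝ → ℝ)
    (hinit : ∀ i j, |C i r - C j r| ≤ σ * (1 + ρ))
    (hdrift : ∀ i j u v, u ≤ v →
      |(C i v - C j v) - (C i u - C j u)| ≤ 2 * ρ * (v - u)) :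
    ∀ t, r ≤ t → t ≤ r + (σ + AD) → ∀ i j,
      |C i t - C j t| ≤ σ * (1 + ρ) + (σ + AD) * (2 * ρ) := by
  intro t hrt ht i j
  have h1 := hinit i j
  have h2 := hdrift i j r t hrt
  have h3 : |C i t - C j t| ≤ |C i r - C j r| + |(C i t - C j t) - (C i r - C j r)| := by
    have := abs_add_le (C i r - C j r) ((C i t - C j t) - (C i r - C j r))
    simpa using this
  have h4 : 2 * ρ * (t - r) ≤ (σ + AD) * (2 * ρ) := by nlinarith
  linarith
end

section
/- Timer transfer lemma: if correct timers are pairwise within σ̄(1+ρ) and message delivery plus processing takes at most d(1+ρ) on any correct timer, then a message sent by a correct node at its timer time T_i ≤ τ + r·d̄ is received by every correct node p_j by timer time τ + (r+1)·d̄ on p_j's timer, where d̄ = (σ̄ + d)(1+ρ). -/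
/-- Timer transfer: with timers pairwise within σ̄(1+ρ) and delivery within d(1+ρ) on
the receiver's timer, a message sent at sender timer time ≤ τ + r·d̄ is received by
receiver timer time ≤ τ + (r+1)·d̄, where d̄ = (σ̄ + d)(1+ρ). -/
theorem timer_transfer (σb d ρ τ r : ℝ) (hσb : 0 ≤ σb) (hd : 0 ≤ d) (hρ : 0 ≤ ρ)
    (Ti Tj : ℝ → ℝ) (t t' : ℝ)
    (hsync : ∀ s : ℝ, |Ti s - Tj s| ≤ σb * (1 + ρ))
    (harr : Tj t' ≤ Tj t + d * (1 + ρ))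
    (hsend : Ti t ≤ τ + r * ((σb + d) * (1 + ρ))) :
    Tj t' ≤ τ + (r + 1) * ((σb + d) * (1 + ρ)) := by
  have h := abs_le.mp (hsync t)
  nlinarith [h.1, h.2]
end

section
/- Unforgeability of ConsBCast: in an execution where no correct node sends (echo, General, v', τ, 1), no correct node ever accumulates n−f distinct (echo', General, v', τ, 1) messages, assuming echo' messages are sent by a correct node only upon receiving either n−f echo messages or n−2f echo' messages, and n ≥ 3f+1; hence no correct node accepts (General, v', τ, 1). -/
/-- Unforgeability: if no correct node sends an echo for v', then (by induction on the
causal order) no correct node ever sends echo' for v', and hence no node can gather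
n - f distinct echo' senders, so no correct node accepts v'. -/
theorem unforgeability (n f : ℕ) (hn : 3 * f + 1 ≤ n)
    (B : Finset (Fin n)) (hB : B.card ≤ f)
    (sendEcho sendEcho' : Fin n → ℕ → Prop)
    (hnoecho : ∀ i t, i ∉ B → ¬ sendEcho i t)
    (hrule : ∀ i t, i ∉ B → sendEcho' i t →
      (∃ S : Finset (Fin n), n - f ≤ S.card ∧
        ∀ j ∈ S, j ∈ B ∨ ∃ t', sendEcho j t') ∨
      (∃ S : Finset (Fin n), n - 2 * f ≤ S.card ∧
        ∀ j ∈ S, j ∈ B ∨ ∃ t' < t, sendEcho' j t')) :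
    (∀ i t, i ∉ B → ¬ sendEcho' i t) ∧
      ∀ S : Finset (Fin n), (∀ j ∈ S, j ∈ B ∨ ∃ t, sendEcho' j t) →
        S.card < n - f := by
  have key : ∀ t i, i ∉ B → ¬ sendEcho' i t := by
    intro t
    induction t using Nat.strong_induction_on with
    | _ t ih =>
      intro i hi hsend
      rcases hrule i t hi hsend with ⟨S, hScard, hS⟩ | ⟨S, hScard, hS⟩
      · have hSB : S ⊆ B := by
          intro j hj
          rcases hS j hj with h | ⟨t', ht'⟩
          · exact h
          · by_cases hjB : j ∈ B
            · exact hjB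
            · exact absurd ht' (hnoecho j t' hjB)
        have := Finset.card_le_card hSB
        omega
      · have hSB : S ⊆ B := by
          intro j hj
          rcases hS j hj with h | ⟨t', ht', hs⟩
          · exact h
          · by_cases hjB : j ∈ B
            · exact hjB
            · exact absurd hs (ih t' ht' j hjB)
        have := Finset.card_le_card hSB
        omega
  refine ⟨fun i t hi => key t i hi, fun S hS => ?_⟩
  have hSB : S ⊆ B := by
    intro j hj
    rcases hS j hj with h | ⟨t, hs⟩
    · exact h
    · by_cases hjB : j ∈ B
      · exact hjB
      · exact absurd hs (key t j hjB)
  have := Finset.card_le_card hSB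
  omega
end

section
/- Relay amplification: if n ≥ 3f+1 and some correct node receives n−f distinct echo' messages for (p,m,τ,k), then at least n−2f ≥ f+1 of these were sent by correct nodes; since every correct node that receives n−2f distinct echo' messages itself sends echo', eventually every correct node receives at least n−f distinct echo' messages (counting all correct nodes' sends) and accepts. -/
/-- Relay amplification: n - 2f ≥ f + 1 correct senders suffice to make every correct
node send, so every correct node ends up with at least n - f distinct senders. -/
theorem relay_amplification (n f : ℕ) (hn : 3 * f + 1 ≤ n)
    (B : Finset (Fin n)) (hB : B.card ≤ f)
    (Send : Fin n → Prop)
    (S₀ : Finset (Fin n)) (hS₀B : ∀ i ∈ S₀, i ∉ B) (hS₀s : ∀ i ∈ S₀, Send i)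
    (hS₀c : n - 2 * f ≤ S₀.card)
    (hrelay : ∀ i, i ∉ B →
      (∃ S : Finset (Fin n), n - 2 * f ≤ S.card ∧ ∀ j ∈ S, Send j) → Send i) :
    f + 1 ≤ n - 2 * f ∧ (∀ i, i ∉ B → Send i) ∧
      ∃ S : Finset (Fin n), n - f ≤ S.card ∧ ∀ j ∈ S, Send j := by
  have hall : ∀ i, i ∉ B → Send i := fun i hi =>
    hrelay i hi ⟨S₀, hS₀c, hS₀s⟩
  refine ⟨by omega, hall, ⟨Bᶜ, ?_, fun j hj => hall j (by simpa using hj)⟩⟩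
  have : Bᶜ.card = n - B.card := by
    simp [Finset.card_compl]
  omega
end

section
/- Early-stopping abort/decide exclusivity (Lemma 2 of ByzConsensus analysis): if a correct node aborts at time T+2r·d̄ having identified exactly r−2 broadcasters, and the detection property guarantees that any accept of r−1 distinct broadcast messages by some correct node forces all correct nodes to hold r−1 broadcasters by T+(2r−1)·d̄, then no correct node decides at any time T+2r'·d̄ ≥ T+2r·d̄. -/
/-- Abort/decide exclusivity (Lemma 2): if a correct node aborts at T + 2r·d̄ having
identified exactly r - 2 broadcasters, and deciding at any round r' ≥ r would force
every correct node to hold r - 1 broadcasters by T + (2r - 1)·d̄, then no correct node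
decides at any round r' ≥ r. -/
theorem abort_decide_exclusive (n : ℕ) (T dbar : ℝ) (hd : 0 ≤ dbar)
    (r : ℕ) (hr : 2 ≤ r)
    (B : Finset (Fin n))
    (broadcasters : Fin n → ℝ → Finset (Fin n))
    (hmono : ∀ i s s', s ≤ s' → broadcasters i s ⊆ broadcasters i s')
    (decides : Fin n → ℕ → Prop)
    (hdetect : ∀ j r', j ∉ B → r ≤ r' → decides j r' →
      ∀ k, k ∉ B → r - 1 ≤ (broadcasters k (T + (2 * (r : ℝ) - 1) * dbar)).card)
    (i : Fin n) (hi : i ∉ B)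
    (habort : (broadcasters i (T + (2 * (r : ℝ)) * dbar)).card = r - 2) :
    ∀ j r', j ∉ B → r ≤ r' → ¬ decides j r' := by
  intro j r' hj hr' hdec
  have h1 := hdetect j r' hj hr' hdec i hi
  have hle : T + (2 * (r : ℝ) - 1) * dbar ≤ T + (2 * (r : ℝ)) * dbar := by
    have : (2 * (r : ℝ) - 1) * dbar ≤ (2 * (r : ℝ)) * dbar := by
      apply mul_le_mul_of_nonneg_right _ hd; linarith
    linarith
  have h2 := Finset.card_le_card (hmono i _ _ hle)
  omega
end

section
/- Validity of ByzConsensus: if all correct nodes invoke the protocol with the same value v and timer time T, then (given n ≥ 3f+1) every correct node receives at least n−2f distinct (echo, General, v, T, 1) messages, sends echo', receives n−f distinct echo' messages, accepts (General, v, T, 1), and returns v. -/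
/-- Validity of ByzConsensus: if all correct nodes start with the same value v, each
correct node gathers n - 2f echoes for v, sends echo', gathers n - f echo' messages,
accepts v, and returns v. -/
theorem byz_consensus_validity {V : Type*} (n f : ℕ) (hn : 3 * f + 1 ≤ n)
    (B : Finset (Fin n)) (hB : B.card ≤ f)
    (v : V)
    (sendsEcho sendsEcho' accepts : Fin n → V → Prop) (ret : Fin n → V)
    (h1 : ∀ i, i ∉ B → sendsEcho i v)
    (h2 : ∀ i, i ∉ B → ∀ (w : V) (S : Finset (Fin n)), (∀ j ∈ S, j ∉ B) →
      n - 2 * f ≤ S.card → (∀ j ∈ S, sendsEcho j w) → sendsEcho' i w)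
    (h3 : ∀ i, i ∉ B → ∀ (w : V) (S : Finset (Fin n)), (∀ j ∈ S, j ∉ B) →
      n - f ≤ S.card → (∀ j ∈ S, sendsEcho' j w) → accepts i w)
    (h4 : ∀ i, i ∉ B → ∀ w : V, accepts i w → ret i = w) :
    ∀ i, i ∉ B → accepts i v ∧ ret i = v := by
  intro i hi
  have hScard : n - f ≤ Bᶜ.card := by
    have : Bᶜ.card = n - B.card := by
      simp [Finset.card_compl]
    omega
  have hmem : ∀ j ∈ Bᶜ, j ∉ B := fun j hj => Finset.mem_compl.mp hj
  have hecho' : ∀ j, j ∉ B → sendsEcho' j v := fun j hj =>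
    h2 j hj v Bᶜ hmem (by omega) (fun k hk => h1 k (hmem k hk))
  have hacc : accepts i v :=
    h3 i hi v Bᶜ hmem hScard (fun k hk => hecho' k (hmem k hk))
  exact ⟨hacc, h4 i hi v hacc⟩
end

section
/- Precision of ApproxClocks: if the system is in a synchronized clock_state with correct clocks within 2σ + ε of each other at the pulse, the agreed value Clock_Consensus lies in the range of the correct initial clock values (validity of approximate agreement), and each node sets Clock := Clock_Consensus + elapsed time since its pulse, then immediately after any subset of correct nodes has executed the adjustment, all correct clocks are within 2σ + ε' of each other, where ε' accounts for drift O(ρ). -/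
/-- Precision of ApproxClocks: pulses within σ, clock-at-pulse values pairwise within
σ(1+ρ), agreed value K between correct clock-at-pulse values; after any node resets
its clock to K plus its elapsed local time since the pulse, any two correct clocks
(adjusted or not) are within 2σ(1+ρ) + 2ρ(t - t₀). -/
theorem approx_clocks_precision {ι : Type*} (σ ρ t₀ K : ℝ) (hσ : 0 < σ) (hρ : 0 < ρ)
    (p : ι → ℝ) (hp : ∀ i, t₀ ≤ p i ∧ p i ≤ t₀ + σ)
    (C : ι → ℝ → ℝ)
    (hdrift : ∀ i u v, u ≤ v →
      (1 - ρ) * (v - u) ≤ C i v - C i u ∧ C i v - C i u ≤ (1 + ρ) * (v - u))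
    (hsync : ∀ i j, |C i (p i) - C j (p j)| ≤ σ * (1 + ρ))
    (hK : ∃ i j, C i (p i) ≤ K ∧ K ≤ C j (p j)) :
    ∀ i j t, p i ≤ t → p j ≤ t →
      |(K + (C i t - C i (p i))) - C j t| ≤ 2 * σ * (1 + ρ) + 2 * ρ * (t - t₀) ∧
      |(K + (C i t - C i (p i))) - (K + (C j t - C j (p j)))|
        ≤ 2 * σ * (1 + ρ) + 2 * ρ * (t - t₀) := by
  obtain ⟨a, b, haK, hKb⟩ := hK
  intro i j t hti htj
  obtain ⟨hpi1, hpi2⟩ := hp i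
  obtain ⟨hpj1, hpj2⟩ := hp j
  have haj := abs_le.mp (hsync a j)
  have hbj := abs_le.mp (hsync b j)
  have hKj : |K - C j (p j)| ≤ σ * (1 + ρ) :=
    abs_le.mpr ⟨by linarith [haj.1], by linarith [hbj.2]⟩
  have di := hdrift i (p i) t hti
  have dj := hdrift j (p j) t htj
  have hri : ρ * (t - p i) ≤ ρ * (t - t₀) := by nlinarith
  have hrj : ρ * (t - p j) ≤ ρ * (t - t₀) := by nlinarith
  have e1 : (1 + ρ) * (t - p i) = (t - p i) + ρ * (t - p i) := by ring
  have e2 : (1 - ρ) * (t - p i) = (t - p i) - ρ * (t - p i) := by ring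
  have e3 : (1 + ρ) * (t - p j) = (t - p j) + ρ * (t - p j) := by ring
  have e4 : (1 - ρ) * (t - p j) = (t - p j) - ρ * (t - p j) := by ring
  have hAd : |(C i t - C i (p i)) - (C j t - C j (p j))| ≤ σ + 2 * ρ * (t - t₀) :=
    abs_le.mpr ⟨by linarith [di.1, dj.2], by linarith [di.2, dj.1]⟩
  have hσρ : 0 ≤ σ * ρ := by positivity
  constructor
  · have h := abs_add_le (K - C j (p j)) ((C i t - C i (p i)) - (C j t - C j (p j)))
    have heq : (K + (C i t - C i (p i))) - C j t
        = (K - C j (p j)) + ((C i t - C i (p i)) - (C j t - C j (p j))) := by ring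
    rw [heq]
    calc _ ≤ _ := h
    _ ≤ σ * (1 + ρ) + (σ + 2 * ρ * (t - t₀)) := by linarith
    _ ≤ 2 * σ * (1 + ρ) + 2 * ρ * (t - t₀) := by nlinarith
  · have heq : (K + (C i t - C i (p i))) - (K + (C j t - C j (p j)))
        = (C i t - C i (p i)) - (C j t - C j (p j)) := by ring
    rw [heq]
    calc _ ≤ σ + 2 * ρ * (t - t₀) := hAd
    _ ≤ 2 * σ * (1 + ρ) + 2 * ρ * (t - t₀) := by nlinarith
end

section
/- If at most f of n values are arbitrary and the remaining n−f values lie in a real interval [a,b], and n ≥ 3f+1, then after discarding the f smallest and f largest values from the sorted list, all remaining n−2f values lie in [a,b]; in particular the median of the remaining values lies in [a,b]. -/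
/-- If at least n - f of n values lie in [a, b] and n ≥ 3f + 1, then after discarding
the f smallest and f largest values, all remaining n - 2f values (in particular their
median) lie in [a, b]. -/
theorem trim_stays_in_range (n f : ℕ) (hn : 3 * f + 1 ≤ n) (a b : ℝ) (hab : a ≤ b)
    (V C : Multiset ℝ) (hV : Multiset.card V = n)
    (hC : C ≤ V) (hCcard : n - f ≤ Multiset.card C)
    (hCab : ∀ x ∈ C, a ≤ x ∧ x ≤ b) :
    ∀ x ∈ ((V.sort (· ≤ ·)).drop f).take (n - 2 * f), a ≤ x ∧ x ≤ b := by
  classical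
  intro x hx
  set L := V.sort (· ≤ ·) with hLdef
  have hsorted : L.Pairwise (· ≤ ·) := V.pairwise_sort _
  have hcoe : (↑L : Multiset ℝ) = V := V.sort_eq _
  have hlen : L.length = n := by
    have := congrArg Multiset.card hcoe
    simpa using this.trans hV
  obtain ⟨D, hD⟩ := Multiset.le_iff_exists_add.mp hC
  have hDcard : Multiset.card D ≤ f := by
    have h1 : Multiset.card C + Multiset.card D = n := by
      rw [← Multiset.card_add, ← hD, hV]
    omega
  -- count of elements < a is at most f
  have hcountlt : L.countP (fun y => decide (y < a)) ≤ f := by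
    have h0 : Multiset.countP (fun y => decide (y < a)) C = 0 := by
      rw [Multiset.countP_eq_zero]
      intro y hy
      simpa using not_lt.mpr (hCab y hy).1
    have : L.countP (fun y => decide (y < a))
        = Multiset.countP (fun y => decide (y < a)) V := by
      rw [← hcoe, Multiset.coe_countP]; simp
    rw [this, hD, Multiset.countP_add, h0, zero_add]
    exact le_trans (Multiset.countP_le_card _ _) hDcard
  -- count of elements > b is at most f
  have hcountgt : L.countP (fun y => decide (b < y)) ≤ f := by
    have h0 : Multiset.countP (fun y => decide (b < y)) C = 0 := by
      rw [Multiset.countP_eq_zero]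
      intro y hy
      simpa using not_lt.mpr (hCab y hy).2
    have : L.countP (fun y => decide (b < y))
        = Multiset.countP (fun y => decide (b < y)) V := by
      rw [← hcoe, Multiset.coe_countP]; simp
    rw [this, hD, Multiset.countP_add, h0, zero_add]
    exact le_trans (Multiset.countP_le_card _ _) hDcard
  -- extract index of x
  obtain ⟨k, hk, hxk⟩ := List.mem_iff_getElem.mp hx
  have hk' : k < n - 2 * f := by
    have := hk
    simp [List.length_take, List.length_drop, hlen] at this
    omega
  have hkL : f + k < L.length := by omega
  have hxeq : x = L[f + k] := by
    rw [← hxk]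
    rw [List.getElem_take, List.getElem_drop]
  subst hxeq
  have hfk1 : f + k < n := by omega
  constructor
  · -- lower bound
    by_contra h
    push_neg at h
    have hall : ∀ y ∈ L.take (f + k + 1), decide (y < a) = true := by
      intro y hy
      obtain ⟨j, hj, rfl⟩ := List.mem_iff_getElem.mp hy
      have hj' : j < f + k + 1 := by
        simp [List.length_take] at hj; omega
      rw [List.getElem_take]
      have hle : L[j] ≤ L[f + k] := by
        rcases Nat.lt_or_ge j (f + k) with hlt | hge
        · exact List.pairwise_iff_getElem.mp hsorted j (f + k) _ _ hlt
        · have : j = f + k := by omega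
          subst this; exact le_refl _
      simpa using lt_of_le_of_lt hle h
    have hlenT : (L.take (f + k + 1)).length = f + k + 1 := by
      simp [List.length_take]; omega
    have hT : (L.take (f + k + 1)).countP (fun y => decide (y < a)) = f + k + 1 := by
      rw [List.countP_eq_length.mpr hall, hlenT]
    have hsub : (L.take (f + k + 1)).countP (fun y => decide (y < a)) ≤ L.countP (fun y => decide (y < a)) :=
      (List.take_sublist (f + k + 1) L).countP_le
    omega
  · -- upper bound
    by_contra h
    push_neg at h
    have hall : ∀ y ∈ L.drop (f + k), decide (b < y) = true := by
      intro y hy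
      obtain ⟨j, hj, rfl⟩ := List.mem_iff_getElem.mp hy
      have hjL : f + k + j < L.length := by
        simp [List.length_drop] at hj; omega
      rw [List.getElem_drop]
      have hle : L[f + k] ≤ L[f + k + j] := by
        rcases Nat.eq_zero_or_pos j with rfl | hpos
        · simp
        · exact List.pairwise_iff_getElem.mp hsorted (f + k) (f + k + j) _ _ (by omega)
      simpa using lt_of_lt_of_le h hle
    have hlenT : (L.drop (f + k)).length = n - (f + k) := by
      simp [List.length_drop, hlen]
    have hT : (L.drop (f + k)).countP (fun y => decide (b < y)) = n - (f + k) := by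
      rw [List.countP_eq_length.mpr hall, hlenT]
    have hsub : (L.drop (f + k)).countP (fun y => decide (b < y)) ≤ L.countP (fun y => decide (b < y)) :=
      (List.drop_sublist (f + k) L).countP_le
    omega
end

section
/- Linear envelope: if a clock is adjusted at most once per cycle of real-time length in [cycle_min, cycle_max], each adjustment has magnitude at most A, and between adjustments the clock rate is within [1−ρ, 1+ρ] of real time, then over any real-time interval [t₀, t] the elapsed clock time Ψ(t₀,t) satisfies (1−ρ)(t−t₀) − A·(⌈(t−t₀)/cycle_min⌉) ≤ Ψ(t₀,t) ≤ (1+ρ)(t−t₀) + A·(⌈(t−t₀)/cycle_min⌉), which is within a linear envelope a(t−t₀)+b ≤ Ψ ≤ g(t−t₀)+h for suitable constants a,b,g,h with a > 0 when A < (1−ρ)·cycle_min. -/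
/-- Linear envelope: a drift-bounded clock adjusted at most ⌈(t-t₀)/cycle_min⌉ times,
each adjustment of magnitude at most A, satisfies the ceiling bounds and hence lies
in a linear envelope with positive lower slope when A < (1-ρ)·cycle_min. -/
theorem linear_envelope (cmin cmax A ρ t₀ t Ψ drift adj : ℝ) (k : ℕ)
    (hcm : 0 < cmin) (hcc : cmin ≤ cmax) (hA : 0 < A) (hρ : 0 < ρ) (hρ1 : ρ < 1)
    (hAc : A < (1 - ρ) * cmin) (ht : t₀ ≤ t)
    (hk : (k : ℝ) ≤ ((⌈(t - t₀) / cmin⌉ : ℤ) : ℝ))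
    (hΨ : Ψ = drift + adj)
    (hdl : (1 - ρ) * (t - t₀) ≤ drift) (hdu : drift ≤ (1 + ρ) * (t - t₀))
    (hadj : |adj| ≤ A * k) :
    ((1 - ρ) * (t - t₀) - A * ((⌈(t - t₀) / cmin⌉ : ℤ) : ℝ) ≤ Ψ ∧
      Ψ ≤ (1 + ρ) * (t - t₀) + A * ((⌈(t - t₀) / cmin⌉ : ℤ) : ℝ)) ∧
    (0 < 1 - ρ - A / cmin ∧
      (1 - ρ - A / cmin) * (t - t₀) - A ≤ Ψ ∧
      Ψ ≤ (1 + ρ + A / cmin) * (t - t₀) + A) := by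
  have hx : 0 ≤ t - t₀ := sub_nonneg.mpr ht
  set c : ℝ := ((⌈(t - t₀) / cmin⌉ : ℤ) : ℝ) with hc
  have habs : |adj| ≤ A * c := hadj.trans (by nlinarith [hA.le])
  have h1 := abs_le.mp habs
  have hceil : c < (t - t₀) / cmin + 1 := Int.ceil_lt_add_one _
  have hdiv : (t - t₀) / cmin * cmin = t - t₀ := div_mul_cancel₀ _ hcm.ne'
  have hAc' : A / cmin < 1 - ρ := (div_lt_iff₀ hcm).mpr hAc
  refine ⟨⟨by linarith [h1.1], by linarith [h1.2]⟩, by linarith, ?_, ?_⟩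
  · have : A * c ≤ A / cmin * (t - t₀) + A := by
      have := mul_le_mul_of_nonneg_left hceil.le hA.le
      rw [mul_add, mul_one] at this
      calc A * c ≤ A * ((t - t₀) / cmin) + A := this
        _ = A / cmin * (t - t₀) + A := by ring
    linarith [h1.1]
  · have : A * c ≤ A / cmin * (t - t₀) + A := by
      have := mul_le_mul_of_nonneg_left hceil.le hA.le
      rw [mul_add, mul_one] at this
      calc A * c ≤ A * ((t - t₀) / cmin) + A := this
        _ = A / cmin * (t - t₀) + A := by ring
    linarith [h1.2]
end
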